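/- Cross-entropy of the Weibull distribution against a Gamma density: for k > 0, λ > 0, α > 0, β > 0, if S ~ Weibull(k, λ), then E[ log g(S | α, β) ] = α log β − log Γ(α) + (α − 1)(log λ − γ/k) − β λ Γ(1 + 1/k), where g(S | α, β) = (β^α/Γ(α)) S^{α−1} e^{−βS} is the Gamma density and γ is the Euler–Mascheroni constant. -/

import Mathlib

open MeasureTheory Real Set

/-- The Weibull density with shape `k > 0` and scale `lam > 0`, supported on `(0, ∞)`. -/
noncomputable def weibullPDF (k lam : ℝ) (x : ℝ) : ℝ :=
  if 0 < x then (k / lam ^ k) * x ^ (k - 1) * Real.exp (-(x / lam) ^ k) else 0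

/-- The Weibull distribution `Weibull(k, lam)` as a measure on `ℝ`. -/
noncomputable def weibullMeasure (k lam : ℝ) : Measure ℝ :=
  MeasureTheory.volume.withDensity fun x => ENNReal.ofReal (weibullPDF k lam x)

/-- The Gamma density with shape `a > 0` and rate `b > 0`, supported on `(0, ∞)`. -/
noncomputable def gammaPDF' (a b : ℝ) (x : ℝ) : ℝ :=
  if 0 < x then (b ^ a / Real.Gamma a) * x ^ (a - 1) * Real.exp (-(b * x)) else 0

/-!
The substitution `u = (S / lam) ^ k` turns `Weibull(k, lam)` into the standard exponential
distribution, with `S = lam * u ^ (1 / k)`. Since `log g(S | a, b)` is affine in `log S` and `S`,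
the cross-entropy reduces to `∫ e^{-u} = 1`, `∫ e^{-u} u ^ (1 / k) = Γ(1 + 1 / k)` and
`∫ e^{-u} log u = Γ'(1) = -γ`, all over `(0, ∞)`.
-/

lemma weibullPDF_nonneg {k lam : ℝ} (hk : 0 ≤ k) (hlam : 0 ≤ lam) (x : ℝ) :
    0 ≤ weibullPDF k lam x := by
  unfold weibullPDF
  split_ifs <;> positivity

lemma integral_weibullMeasure {k lam : ℝ} (hk : 0 ≤ k) (hlam : 0 ≤ lam) (f : ℝ → ℝ) :
    ∫ x, f x ∂(weibullMeasure k lam) = ∫ x in Ioi 0, weibullPDF k lam x * f x := by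
  have hmeas : Measurable fun x => ENNReal.ofReal (weibullPDF k lam x) := by
    refine ENNReal.measurable_ofReal.comp (Measurable.ite measurableSet_Ioi ?_ measurable_const)
    fun_prop
  rw [weibullMeasure, integral_withDensity_eq_integral_toReal_smul hmeas
    (Filter.Eventually.of_forall fun _ => ENNReal.ofReal_lt_top)]
  simp only [ENNReal.toReal_ofReal (weibullPDF_nonneg hk hlam _), smul_eq_mul]
  refine (setIntegral_eq_integral_of_forall_compl_eq_zero fun x hx => ?_).symm
  simp [weibullPDF, show ¬ 0 < x from hx]

lemma integral_weibullMeasure_eq_integral_exp_neg {k lam : ℝ} (hk : 0 < k) (hlam : 0 < lam)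
    (f : ℝ → ℝ) :
    ∫ x, f x ∂(weibullMeasure k lam) = ∫ u in Ioi 0, exp (-u) * f (lam * u ^ (1 / k)) := by
  have hscaled : ∀ t ∈ Ioi (0 : ℝ),
      lam * weibullPDF k lam (lam * t) = k * t ^ (k - 1) * exp (-t ^ k) := by
    intro t (ht : 0 < t)
    have hlam_pow : lam ^ k = lam ^ (k - 1) * lam := by
      rw [← rpow_add_one hlam.ne', sub_add_cancel]
    have : 0 < lam ^ (k - 1) := rpow_pos_of_pos hlam _
    rw [weibullPDF, if_pos (by positivity), mul_rpow hlam.le ht.le, hlam_pow,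
      mul_div_cancel_left₀ t hlam.ne']
    field_simp
  calc ∫ x, f x ∂(weibullMeasure k lam)
      = lam * ∫ t in Ioi 0, weibullPDF k lam (lam * t) * f (lam * t) := by
        rw [integral_weibullMeasure hk.le hlam.le, ← smul_eq_mul,
          integral_comp_mul_left_Ioi' (fun x => weibullPDF k lam x * f x) 0 hlam, mul_zero]
    _ = ∫ t in Ioi 0, (k * t ^ (k - 1)) • (exp (-t ^ k) * f (lam * (t ^ k) ^ (1 / k))) := by
        rw [← integral_const_mul]
        refine setIntegral_congr_fun measurableSet_Ioi fun t ht => ?_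
        rw [← rpow_mul (le_of_lt ht), mul_one_div_cancel hk.ne', rpow_one, smul_eq_mul,
          ← mul_assoc, hscaled t ht]
        ring
    _ = ∫ u in Ioi 0, exp (-u) * f (lam * u ^ (1 / k)) :=
        integral_comp_rpow_Ioi_of_pos (g := fun u => exp (-u) * f (lam * u ^ (1 / k))) hk

lemma abs_log_le_rpow_add_rpow_neg {x ε : ℝ} (hx : 0 < x) (hε : 0 < ε) :
    |log x| ≤ (x ^ ε + x ^ (-ε)) / ε := by
  have hup : ε * log x ≤ x ^ ε - 1 := by
    rw [← log_rpow hx]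
    exact log_le_sub_one_of_pos (rpow_pos_of_pos hx _)
  have hdown : -ε * log x ≤ x ^ (-ε) - 1 := by
    rw [← log_rpow hx]
    exact log_le_sub_one_of_pos (rpow_pos_of_pos hx _)
  rw [le_div_iff₀ hε]
  rcases abs_cases (log x) with ⟨habs, _⟩ | ⟨habs, _⟩ <;> rw [habs] <;>
    nlinarith [rpow_pos_of_pos hx ε, rpow_pos_of_pos hx (-ε)]

lemma integrableOn_exp_neg_mul_log :
    IntegrableOn (fun u => exp (-u) * log u) (Ioi 0) := by
  have hdom : IntegrableOn
      (fun u => 2 * (exp (-u) * u ^ ((3 / 2 : ℝ) - 1) + exp (-u) * u ^ ((1 / 2 : ℝ) - 1)))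
      (Ioi 0) :=
    ((GammaIntegral_convergent (by norm_num)).add
      (GammaIntegral_convergent (by norm_num))).const_mul 2
  refine hdom.mono' (by fun_prop) ?_
  filter_upwards [ae_restrict_mem measurableSet_Ioi] with u (hu : 0 < u)
  rw [norm_mul, norm_of_nonneg (exp_pos _).le, norm_eq_abs,
    show (3 / 2 : ℝ) - 1 = 1 / 2 by norm_num, show (1 / 2 : ℝ) - 1 = -(1 / 2) by norm_num]
  calc exp (-u) * |log u|
      ≤ exp (-u) * ((u ^ (1 / 2 : ℝ) + u ^ (-(1 / 2 : ℝ))) / (1 / 2)) :=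
        mul_le_mul_of_nonneg_left (abs_log_le_rpow_add_rpow_neg hu (by norm_num)) (exp_pos _).le
    _ = _ := by ring

lemma integral_exp_neg_mul_log :
    ∫ u in Ioi 0, exp (-u) * log u = -eulerMascheroniConstant := by
  have hGamma : Complex.Gamma =ᶠ[nhds 1] Complex.GammaIntegral := by
    filter_upwards [(isOpen_lt continuous_const Complex.continuous_re).mem_nhds
      (by norm_num : (0 : ℝ) < (1 : ℂ).re)] with s hs using Complex.Gamma_eq_integral hs
  have hintegral : ∫ t : ℝ in Ioi 0, (t : ℂ) ^ ((1 : ℂ) - 1) * (log t * exp (-t))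
      = ((∫ u in Ioi 0, exp (-u) * log u : ℝ) : ℂ) := by
    rw [← integral_complex_ofReal]
    refine setIntegral_congr_fun measurableSet_Ioi fun t _ => ?_
    push_cast
    rw [sub_self, Complex.cpow_zero]
    ring
  have hderiv :=
    (Complex.hasDerivAt_GammaIntegral (s := 1) (by norm_num)).congr_of_eventuallyEq hGamma
  rw [hintegral] at hderiv
  simpa using hderiv.real_of_complex.unique hasDerivAt_Gamma_one

lemma log_gammaPDF'_of_pos {a b x : ℝ} (ha : 0 < a) (hb : 0 < b) (hx : 0 < x) :
    log (gammaPDF' a b x) = a * log b - log (Gamma a) + (a - 1) * log x - b * x := by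
  rw [gammaPDF', if_pos hx, log_mul (by positivity) (exp_ne_zero _),
    log_mul (by positivity [Gamma_pos_of_pos ha]) (rpow_pos_of_pos hx _).ne',
    log_div (rpow_pos_of_pos hb _).ne' (Gamma_pos_of_pos ha).ne', log_rpow hb, log_rpow hx,
    log_exp]
  ring

/-- Cross-entropy of the Weibull distribution against a Gamma density:
`E[log g(S | a, b)] = a log b − log Γ(a) + (a − 1)(log lam − γ/k) − b lam Γ(1 + 1/k)`. -/
theorem weibull_gamma_cross_entropy (k lam a b : ℝ) (hk : 0 < k) (hlam : 0 < lam)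
    (ha : 0 < a) (hb : 0 < b) :
    ∫ x, Real.log (gammaPDF' a b x) ∂(weibullMeasure k lam)
      = a * Real.log b - Real.log (Real.Gamma a)
          + (a - 1) * (Real.log lam - Real.eulerMascheroniConstant / k)
          - b * lam * Real.Gamma (1 + 1 / k) := by
  set C := a * log b - log (Gamma a) + (a - 1) * log lam
  have hintegrand : ∀ u ∈ Ioi (0 : ℝ), exp (-u) * log (gammaPDF' a b (lam * u ^ (1 / k)))
      = C * exp (-u) + (a - 1) / k * (exp (-u) * log u)
        - b * lam * (exp (-u) * u ^ (1 + 1 / k - 1)) := by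
    intro u (hu : 0 < u)
    rw [log_gammaPDF'_of_pos ha hb (by positivity), log_mul hlam.ne' (rpow_pos_of_pos hu _).ne',
      log_rpow hu, add_sub_cancel_left]
    ring
  have hexp := (integrableOn_exp_neg_Ioi 0).const_mul C
  have hlog := integrableOn_exp_neg_mul_log.const_mul ((a - 1) / k)
  have hsum : IntegrableOn (fun u => C * exp (-u) + (a - 1) / k * (exp (-u) * log u)) (Ioi 0) :=
    hexp.add hlog
  have hpow := (GammaIntegral_convergent (by positivity : 0 < 1 + 1 / k)).const_mul (b * lam)
  rw [integral_weibullMeasure_eq_integral_exp_neg hk hlam,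
    setIntegral_congr_fun measurableSet_Ioi hintegrand, integral_sub hsum hpow,
    integral_add hexp hlog, integral_const_mul, integral_const_mul, integral_const_mul,
    integral_exp_neg_Ioi_zero, integral_exp_neg_mul_log, ← Gamma_eq_integral (by positivity)]
  ring
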